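/- Let a, b, k > 0 and y > 0, z > 0 be real numbers. Define h₀(y,z) = yz/k, h₁(y,z) = (z−b)/k² + z(a+y²)(y−z)/(k²y), and h₂(y,z) = (1/(k³y³))[by(−y(1+a+y²) + 2(a+y²)z) + z(ay(y + 2y³ + z − 6y²z) + a²(y² − 2yz − z²) + y³(−2z + y(3 + y² − 4yz + z²)))], and for real ε set h_ε(y,z) = h₀ + ε h₁ + ε² h₂. Then the invariance-equation residual R(ε) = f(h_ε(y,z), y, z) − ε [(∂h_ε/∂y)(y,z) · g₁(h_ε(y,z), y, z, ε) + (∂h_ε/∂z)(y,z) · g₂(y,z)] satisfies R(ε) = O(ε³) as ε → 0; i.e., there exist C > 0 and δ > 0 such that |R(ε)| ≤ C|ε|³ for |ε| < δ. -/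

import Mathlib

/-!
For fixed `(y, z)` the partial derivatives of `h_ε` are `d₀ + ε d₁ + ε² d₂`, where `dᵢ` is the
corresponding partial derivative of `hᵢ`, so the residual is a polynomial of degree six in `ε`.
Its coefficients of `ε⁰`, `ε¹`, `ε²` are the invariance equation at orders zero, one and two,
which `h₀`, `h₁`, `h₂` solve; hence the residual is `ε³` times a polynomial in `ε`, bounded near
`ε = 0`. The derivatives of `h₂` first appear at order `ε³`, so they never need computing.
-/

/-- Fast vector field of the 3D Sel'kov slow subsystem. -/
noncomputable def Selkovf (k : ℝ) (x y z : ℝ) : ℝ := y ^ 2 * z - k * x * y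

/-- First slow vector field of the 3D Sel'kov slow subsystem. -/
noncomputable def Selkovg1 (a : ℝ) (x y z ε : ℝ) : ℝ := a * z + y ^ 2 * z - y + ε * x

/-- Second slow vector field of the 3D Sel'kov slow subsystem. -/
noncomputable def Selkovg2 (a b : ℝ) (y z : ℝ) : ℝ := -a * z - y ^ 2 * z + b

noncomputable def Selkovh0 (k : ℝ) (y z : ℝ) : ℝ := y * z / k

noncomputable def Selkovh1 (a b k : ℝ) (y z : ℝ) : ℝ :=
  (z - b) / k ^ 2 + z * (a + y ^ 2) * (y - z) / (k ^ 2 * y)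

noncomputable def Selkovh2 (a b k : ℝ) (y z : ℝ) : ℝ :=
  (b * y * (-y * (1 + a + y ^ 2) + 2 * (a + y ^ 2) * z) +
    z * (a * y * (y + 2 * y ^ 3 + z - 6 * y ^ 2 * z) +
      a ^ 2 * (y ^ 2 - 2 * y * z - z ^ 2) +
      y ^ 3 * (-2 * z + y * (3 + y ^ 2 - 4 * y * z + z ^ 2)))) / (k ^ 3 * y ^ 3)

noncomputable def Selkovhε (a b k : ℝ) (y z ε : ℝ) : ℝ :=
  Selkovh0 k y z + ε * Selkovh1 a b k y z + ε ^ 2 * Selkovh2 a b k y z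

/-- The residual `R(ε)` of the invariance equation at `(y, z)`, for a graph whose value and
partial derivatives at `(y, z)` are `h`, `hy`, `hz`. -/
noncomputable def selkovResidual (a b k ε h hy hz y z : ℝ) : ℝ :=
  Selkovf k h y z - ε * (hy * Selkovg1 a h y z ε + hz * Selkovg2 a b y z)

theorem exists_abs_pow_mul_le_of_continuousAt {q : ℝ → ℝ} (hq : ContinuousAt q 0) (n : ℕ) :
    ∃ C > (0 : ℝ), ∃ δ > (0 : ℝ), ∀ ε : ℝ, |ε| < δ → |ε ^ n * q ε| ≤ C * |ε| ^ n := by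
  obtain ⟨δ, hδ, hq⟩ := Metric.continuousAt_iff.mp hq 1 one_pos
  refine ⟨|q 0| + 1, by positivity, δ, hδ, fun ε hε => ?_⟩
  have hqε : |q ε| ≤ |q 0| + 1 := by
    have := hq (by simpa [Real.dist_eq] using hε)
    rw [Real.dist_eq] at this
    linarith [abs_sub_abs_le_abs_sub (q ε) (q 0)]
  rw [abs_mul, abs_pow, mul_comm]
  gcongr

theorem selkovResidual_secondOrder_eq {a b k y z h₀ h₁ h₂ p₀ p₁ p₂ q₀ q₁ q₂ : ℝ}
    (e₀ : Selkovf k h₀ y z = 0)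
    (e₁ : k * y * h₁ + p₀ * Selkovg1 a h₀ y z 0 + q₀ * Selkovg2 a b y z = 0)
    (e₂ : k * y * h₂ + p₁ * Selkovg1 a h₀ y z 0 + p₀ * h₀ + q₁ * Selkovg2 a b y z = 0)
    (ε : ℝ) :
    selkovResidual a b k ε (h₀ + ε * h₁ + ε ^ 2 * h₂) (p₀ + ε * p₁ + ε ^ 2 * p₂)
        (q₀ + ε * q₁ + ε ^ 2 * q₂) y z =
      ε ^ 3 * -(p₂ * Selkovg1 a h₀ y z 0 + q₂ * Selkovg2 a b y z + p₀ * h₁ + p₁ * h₀ +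
        ε * (p₀ * h₂ + p₁ * h₁ + p₂ * h₀) + ε ^ 2 * (p₁ * h₂ + p₂ * h₁) + ε ^ 3 * (p₂ * h₂)) := by
  simp only [selkovResidual, Selkovf, Selkovg1] at *
  linear_combination e₀ - ε * e₁ - ε ^ 2 * e₂

theorem exists_abs_selkovResidual_secondOrder_le {a b k y z h₀ h₁ h₂ p₀ p₁ p₂ q₀ q₁ q₂ : ℝ}
    (e₀ : Selkovf k h₀ y z = 0)
    (e₁ : k * y * h₁ + p₀ * Selkovg1 a h₀ y z 0 + q₀ * Selkovg2 a b y z = 0)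
    (e₂ : k * y * h₂ + p₁ * Selkovg1 a h₀ y z 0 + p₀ * h₀ + q₁ * Selkovg2 a b y z = 0) :
    ∃ C > (0 : ℝ), ∃ δ > (0 : ℝ), ∀ ε : ℝ, |ε| < δ →
      |selkovResidual a b k ε (h₀ + ε * h₁ + ε ^ 2 * h₂) (p₀ + ε * p₁ + ε ^ 2 * p₂)
        (q₀ + ε * q₁ + ε ^ 2 * q₂) y z| ≤ C * |ε| ^ 3 := by
  simp only [selkovResidual_secondOrder_eq e₀ e₁ e₂]
  exact exists_abs_pow_mul_le_of_continuousAt (by fun_prop) 3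

theorem hasDerivAt_selkovh0_y (k y z : ℝ) :
    HasDerivAt (fun y' => Selkovh0 k y' z) (z / k) y :=
  (((hasDerivAt_id' y).mul_const z).div_const k).congr_deriv (by ring)

theorem hasDerivAt_selkovh0_z (k y z : ℝ) :
    HasDerivAt (fun z' => Selkovh0 k y z') (y / k) z :=
  (((hasDerivAt_id' z).const_mul y).div_const k).congr_deriv (by ring)

theorem hasDerivAt_selkovh1_y (a b k y z : ℝ) (hy : y ≠ 0) (hk : k ≠ 0) :
    HasDerivAt (fun y' => Selkovh1 a b k y' z)
      (z * (y ^ 2 * (2 * y - z) + a * z) / (k ^ 2 * y ^ 2)) y := by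
  have hnum := (((hasDerivAt_pow 2 y).const_add a).const_mul z).fun_mul
    ((hasDerivAt_id' y).sub_const z)
  have hden := (hasDerivAt_id' y).const_mul (k ^ 2)
  refine ((hnum.fun_div hden (by simp [hy, hk])).const_add ((z - b) / k ^ 2)).congr_deriv ?_
  field_simp
  ring

theorem hasDerivAt_selkovh1_z (a b k y z : ℝ) (hy : y ≠ 0) (hk : k ≠ 0) :
    HasDerivAt (fun z' => Selkovh1 a b k y z')
      (1 / k ^ 2 + (a + y ^ 2) * (y - 2 * z) / (k ^ 2 * y)) z := by
  have hnum := ((hasDerivAt_id' z).mul_const (a + y ^ 2)).fun_mul ((hasDerivAt_id' z).const_sub y)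
  refine ((((hasDerivAt_id' z).sub_const b).div_const (k ^ 2)).fun_add
    (hnum.div_const (k ^ 2 * y))).congr_deriv ?_
  field_simp
  ring

theorem differentiableAt_selkovh2_y (a b k y z : ℝ) (hy : y ≠ 0) (hk : k ≠ 0) :
    DifferentiableAt ℝ (fun y' => Selkovh2 a b k y' z) y := by
  unfold Selkovh2
  fun_prop (disch := simp [hy, hk])

theorem differentiableAt_selkovh2_z (a b k y z : ℝ) :
    DifferentiableAt ℝ (fun z' => Selkovh2 a b k y z') z := by
  unfold Selkovh2
  fun_prop

theorem hasDerivAt_selkovhε_y (a b k y z ε : ℝ) (hy : y ≠ 0) (hk : k ≠ 0) :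
    HasDerivAt (fun y' => Selkovhε a b k y' z ε)
      (z / k + ε * (z * (y ^ 2 * (2 * y - z) + a * z) / (k ^ 2 * y ^ 2)) +
        ε ^ 2 * deriv (fun y' => Selkovh2 a b k y' z) y) y :=
  ((hasDerivAt_selkovh0_y k y z).fun_add
    ((hasDerivAt_selkovh1_y a b k y z hy hk).const_mul ε)).fun_add
    ((differentiableAt_selkovh2_y a b k y z hy hk).hasDerivAt.const_mul (ε ^ 2))

theorem hasDerivAt_selkovhε_z (a b k y z ε : ℝ) (hy : y ≠ 0) (hk : k ≠ 0) :
    HasDerivAt (fun z' => Selkovhε a b k y z' ε)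
      (y / k + ε * (1 / k ^ 2 + (a + y ^ 2) * (y - 2 * z) / (k ^ 2 * y)) +
        ε ^ 2 * deriv (fun z' => Selkovh2 a b k y z') z) z :=
  ((hasDerivAt_selkovh0_z k y z).fun_add
    ((hasDerivAt_selkovh1_z a b k y z hy hk).const_mul ε)).fun_add
    ((differentiableAt_selkovh2_z a b k y z).hasDerivAt.const_mul (ε ^ 2))

theorem selkovf_selkovh0 (k y z : ℝ) (hk : k ≠ 0) : Selkovf k (Selkovh0 k y z) y z = 0 := by
  unfold Selkovf Selkovh0
  field_simp
  ring

theorem selkov_invariance_order_one (a b k y z : ℝ) (hy : y ≠ 0) (hk : k ≠ 0) :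
    k * y * Selkovh1 a b k y z + z / k * Selkovg1 a (Selkovh0 k y z) y z 0 +
      y / k * Selkovg2 a b y z = 0 := by
  unfold Selkovh1 Selkovg1 Selkovg2
  field_simp
  ring

theorem selkov_invariance_order_two (a b k y z : ℝ) (hy : y ≠ 0) (hk : k ≠ 0) :
    k * y * Selkovh2 a b k y z +
      z * (y ^ 2 * (2 * y - z) + a * z) / (k ^ 2 * y ^ 2) * Selkovg1 a (Selkovh0 k y z) y z 0 +
      z / k * Selkovh0 k y z +
      (1 / k ^ 2 + (a + y ^ 2) * (y - 2 * z) / (k ^ 2 * y)) * Selkovg2 a b y z = 0 := by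
  unfold Selkovh2 Selkovh0 Selkovg1 Selkovg2
  field_simp
  ring

theorem selkov_invariance_residual_isBigO_general (a b k y z : ℝ)
    (hk : 0 < k) (hy : 0 < y) :
    ∃ C > (0 : ℝ), ∃ δ > (0 : ℝ), ∀ ε : ℝ, |ε| < δ →
      |Selkovf k (Selkovhε a b k y z ε) y z -
        ε * (deriv (fun y' : ℝ => Selkovhε a b k y' z ε) y *
              Selkovg1 a (Selkovhε a b k y z ε) y z ε +
            deriv (fun z' : ℝ => Selkovhε a b k y z' ε) z *
              Selkovg2 a b y z)| ≤ C * |ε| ^ 3 := by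
  obtain ⟨C, hC, δ, hδ, hR⟩ := exists_abs_selkovResidual_secondOrder_le
    (p₂ := deriv (fun y' => Selkovh2 a b k y' z) y)
    (q₂ := deriv (fun z' => Selkovh2 a b k y z') z)
    (selkovf_selkovh0 k y z hk.ne') (selkov_invariance_order_one a b k y z hy.ne' hk.ne')
    (selkov_invariance_order_two a b k y z hy.ne' hk.ne')
  refine ⟨C, hC, δ, hδ, fun ε hε => ?_⟩
  rw [(hasDerivAt_selkovhε_y a b k y z ε hy.ne' hk.ne').deriv,
    (hasDerivAt_selkovhε_z a b k y z ε hy.ne' hk.ne').deriv]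
  exact hR ε hε

/-- The invariance-equation residual of the `O(ε²)` regular expansion of the SIM of the
3D Sel'kov slow subsystem is `O(ε³)` as `ε → 0`. -/
theorem selkov_invariance_residual_isBigO (a b k y z : ℝ)
    (ha : 0 < a) (hb : 0 < b) (hk : 0 < k) (hy : 0 < y) (hz : 0 < z) :
    ∃ C > (0 : ℝ), ∃ δ > (0 : ℝ), ∀ ε : ℝ, |ε| < δ →
      |Selkovf k (Selkovhε a b k y z ε) y z -
        ε * (deriv (fun y' : ℝ => Selkovhε a b k y' z ε) y *
              Selkovg1 a (Selkovhε a b k y z ε) y z ε +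
            deriv (fun z' : ℝ => Selkovhε a b k y z' ε) z *
              Selkovg2 a b y z)| ≤ C * |ε| ^ 3 :=
  selkov_invariance_residual_isBigO_general a b k y z hk hy
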